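/- Let R and Q be connected closed 3-colored graphs on disjoint vertex sets, let c be any of the three colors, and let e be a color-c edge of R and f a color-c edge of Q. Then the Euler characteristic of the connected sum satisfies χ(R #_{e,f} Q) = χ(R) + χ(Q) − 2. -/

import Mathlib

/-!  Closed colored graphs (colored tensor model / matrix model Feynman graphs). -/

/-- A closed `D`-colored graph: a finite set `W` of white vertices, a finite set `B`
of black vertices, and for each color `c : Fin D` a bijection `σ c : W ≃ B`;
the color-`c` edges are the pairs `(w, σ c w)`. -/
structure CGraph (D : ℕ) where
  W : Type
  B : Type
  finW : Finite W
  finB : Finite B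
  σ : Fin D → W ≃ B

namespace CGraph

variable {D : ℕ}

/-- The permutation `σ_d⁻¹ ∘ σ_c` of the white vertices. Its orbits are the
(cd)-bicolored faces. -/
def biperm (G : CGraph D) (c d : Fin D) : Equiv.Perm G.W :=
  (G.σ c).trans (G.σ d).symm

/-- The "same cycle" setoid of a permutation. -/
def cycleSetoid {α : Type*} (π : Equiv.Perm α) : Setoid α where
  r := π.SameCycle
  iseqv := ⟨fun _ => ⟨0, by simp⟩, fun h => h.symm, fun h h' => h.trans h'⟩

/-- The number of cycles (orbits) of a permutation. -/
noncomputable def numCycles {α : Type*} (π : Equiv.Perm α) : ℕ :=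
  Nat.card (Quotient (cycleSetoid π))

/-- Total number of bicolored faces of a closed 3-colored graph
(over the three pairs of colors). -/
noncomputable def faces (G : CGraph 3) : ℕ :=
  numCycles (G.biperm 0 1) + numCycles (G.biperm 0 2) + numCycles (G.biperm 1 2)

/-- Euler characteristic of a closed 3-colored graph:
`χ(G) = #vertices − #edges + #faces = 2|W| − 3|W| + F(G)`. -/
noncomputable def euler (G : CGraph 3) : ℤ :=
  2 * (Nat.card G.W : ℤ) - 3 * (Nat.card G.W : ℤ) + (faces G : ℤ)

/-- Connectedness: the subgroup generated by all the permutations `σ_d⁻¹ ∘ σ_c`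
acts transitively on the white vertices. -/
def Connected (G : CGraph D) : Prop :=
  ∀ v w : G.W,
    ∃ π ∈ Subgroup.closure {π : Equiv.Perm G.W | ∃ c d : Fin D, π = G.biperm c d}, π v = w

/-- The number of white vertices in the (cd)-bicolored face through `v`
(the face itself has twice as many vertices). -/
noncomputable def faceSize (G : CGraph 3) (c d : Fin 3) (v : G.W) : ℕ :=
  Nat.card {w : G.W // (G.biperm c d).SameCycle v w}

/-- A closed 3-colored graph with colors `{0,1,2}` is a Feynman graph of the quartic
complex matrix model iff every (12)-bicolored face has exactly 4 vertices, i.e. every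
orbit of `σ₂⁻¹ ∘ σ₁` has exactly 2 elements. -/
def QuarticFeynman (G : CGraph 3) : Prop :=
  ∀ v : G.W, G.faceSize 1 2 v = 2

end CGraph

namespace CGraph

/-- Connected sum of two closed `D`-colored graphs along the color-`c` edges
`e = (v, σ_c v)` of `R` and `f = (v', τ_c v')` of `Q`: delete the two edges and add the
color-`c` edges `(v, τ_c v')` and `(v', σ_c v)`; all other edges are kept. -/
noncomputable def connSum {D : ℕ} (R Q : CGraph D) (c : Fin D) (v : R.W) (v' : Q.W) : CGraph D where
  W := R.W ⊕ Q.W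
  B := R.B ⊕ Q.B
  finW := by haveI := R.finW; haveI := Q.finW; exact inferInstance
  finB := by haveI := R.finB; haveI := Q.finB; exact inferInstance
  σ := fun d =>
    letI : DecidableEq (R.B ⊕ Q.B) := Classical.decEq _
    if d = c then
      ((R.σ d).sumCongr (Q.σ d)).trans
        (Equiv.swap (Sum.inl (R.σ c v)) (Sum.inr (Q.σ c v')))
    else (R.σ d).sumCongr (Q.σ d)

end CGraph

/-! For a pair of colors not containing `c`, the face permutation of the connected sum is the
disjoint union of those of `R` and `Q`. For a pair containing `c`, it is that disjoint union
composed with the transposition of `inl v` and `inr v'`; these lie in different cycles, so the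
transposition merges two faces into one. Two faces are lost in total, while vertices and edges
add up, so `χ` drops by `2`. -/

open Equiv

namespace Equiv

theorem trans_swap_trans_symm_eq_mul_swap {α β : Type*} [DecidableEq α] [DecidableEq β]
    (E F : α ≃ β) (x y : β) :
    (E.trans (swap x y)).trans F.symm = (E.trans F.symm) * swap (E.symm x) (E.symm y) := by
  ext z
  simp only [trans_apply, Perm.mul_apply, swap_apply_def, eq_symm_apply]
  split_ifs <;> simp_all

theorem trans_symm_swap_eq_swap_mul {α β : Type*} [DecidableEq α] [DecidableEq β]
    (E F : α ≃ β) (x y : β) :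
    E.trans (F.trans (swap x y)).symm = swap (F.symm x) (F.symm y) * (E.trans F.symm) := by
  ext z
  simp only [trans_apply, symm_trans_apply, Perm.mul_apply, swap_apply_def, symm_swap,
    symm_apply_eq, apply_symm_apply]
  split_ifs <;> simp_all

end Equiv

namespace Equiv.Perm

variable {α : Type*}

theorem SameCycle.eq_of_comp_eq {β : Type*} {π : Perm α} {f : α → β} (hf : f ∘ π = f)
    {x y : α} (hxy : π.SameCycle x y) : f x = f y := by
  obtain ⟨n, rfl⟩ := hxy
  have hinv : f ∘ ⇑π⁻¹ = f := by
    conv_lhs => rw [← hf]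
    rw [Function.comp_assoc, ← coe_mul, mul_inv_cancel, coe_one, Function.comp_id]
  induction n using Int.induction_on generalizing x with
  | zero => rfl
  | succ n ih => rw [zpow_add_one, mul_apply, ← ih, ← congrFun hf x, Function.comp_apply]
  | pred n ih => rw [zpow_sub_one, mul_apply, ← ih, ← congrFun hinv x, Function.comp_apply]

theorem not_sameCycle_sumCongr_inl_inr {β : Type*} (π : Perm α) (ρ : Perm β) (a : α) (b : β) :
    ¬(sumCongr π ρ).SameCycle (.inl a) (.inr b) := by
  intro h
  have hleft : Sum.isLeft ∘ ⇑(sumCongr π ρ) = Sum.isLeft := by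
    funext z
    cases z <;> rfl
  simpa using h.eq_of_comp_eq hleft

theorem sameCycle_mul_swap [Finite α] [DecidableEq α] {σ : Perm α} {a b : α}
    (hab : ¬σ.SameCycle a b) : (σ * swap a b).SameCycle a b := by
  have hper : ∃ k : ℕ, (σ ^ (k + 1)) b = b :=
    ⟨orderOf σ - 1, by rw [Nat.sub_add_cancel (orderOf_pos σ), pow_orderOf_eq_one]; rfl⟩
  set k := Nat.find hper
  -- Until `σ b` returns to `b`, its `σ`-orbit avoids `a` and `b`, where the swap acts.
  have walk : ∀ j ≤ k, ((σ * swap a b) ^ j) (σ b) = (σ ^ (j + 1)) b := by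
    intro j hj
    induction j with
    | zero => simp
    | succ j ih =>
      have hne_a : (σ ^ (j + 1)) b ≠ a := fun h =>
        hab (by rw [← h]; exact sameCycle_pow_left.2 (SameCycle.refl σ b))
      have hne_b : (σ ^ (j + 1)) b ≠ b := Nat.find_min hper (by omega)
      rw [pow_succ', mul_apply, ih (by omega), mul_apply, swap_apply_of_ne_of_ne hne_a hne_b,
        ← mul_apply, ← pow_succ']
  have hσb : (σ * swap a b).SameCycle (σ b) b :=
    ⟨k, by rw [zpow_natCast, walk k le_rfl, Nat.find_spec hper]⟩
  have ha : (σ * swap a b) a = σ b := by simp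
  exact sameCycle_apply_left.1 (ha ▸ hσb)

end Equiv.Perm

theorem Nat.card_quot_pair_add_one {γ : Type*} [Finite γ] {u w : γ} (h : u ≠ w) :
    Nat.card (Quot fun x y : γ => x = u ∧ y = w) + 1 = Nat.card γ := by
  classical
  let e : Quot (fun x y : γ => x = u ∧ y = w) ≃ {x // x ≠ w} :=
    { toFun := Quot.lift (fun x => if hx : x = w then ⟨u, h⟩ else ⟨x, hx⟩)
        (by rintro x y ⟨rfl, rfl⟩; simp [h])
      invFun := fun x => Quot.mk _ x.1
      left_inv := Quot.ind fun x => by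
        by_cases hx : x = w
        · subst hx
          simp only [dif_pos]
          exact Quot.sound ⟨rfl, rfl⟩
        · simp [hx]
      right_inv := by rintro ⟨x, hx⟩; simp [hx] }
  rw [Nat.card_congr e, ← Finite.card_option, Nat.card_congr (optionSubtypeNe w)]

namespace CGraph

open Equiv.Perm

section Cycles

variable {α β : Type*}

theorem mk_cycleSetoid_comp (π : Perm α) :
    Quotient.mk (cycleSetoid π) ∘ ⇑π = Quotient.mk (cycleSetoid π) :=
  funext fun _ => Quotient.sound (sameCycle_apply_left.2 SameCycle.rfl)

theorem comp_mul_swap_eq [DecidableEq α] {f : α → β} {τ : Perm α} (hf : f ∘ τ = f) {a b : α}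
    (hab : f a = f b) : f ∘ ⇑(τ * swap a b) = f := by
  funext x
  rw [coe_mul, ← Function.comp_assoc, hf, Function.comp_apply, swap_apply_def]
  split_ifs with hxa hxb
  · rw [hxa, hab]
  · rw [hxb, hab]
  · rfl

theorem numCycles_sumCongr [Finite α] [Finite β] (π : Perm α) (ρ : Perm β) :
    numCycles (Perm.sumCongr π ρ) = numCycles π + numCycles ρ := by
  rw [numCycles, numCycles, numCycles, ← Nat.card_sum]
  refine Nat.card_congr
    { toFun := Quotient.lift (Sum.elim (Sum.inl ∘ Quotient.mk _) (Sum.inr ∘ Quotient.mk _))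
        fun _ _ h => h.eq_of_comp_eq ?_
      invFun := Sum.elim
        (Quotient.lift (Quotient.mk _ ∘ Sum.inl) fun _ _ h => h.eq_of_comp_eq ?_)
        (Quotient.lift (Quotient.mk _ ∘ Sum.inr) fun _ _ h => h.eq_of_comp_eq ?_)
      left_inv := Quotient.ind fun z => by cases z <;> rfl
      right_inv := by rintro (q | q) <;> induction q using Quotient.ind <;> rfl }
  · change _ ∘ Sum.map π ρ = _
    rw [Sum.elim_comp_map, Function.comp_assoc, Function.comp_assoc, mk_cycleSetoid_comp,
      mk_cycleSetoid_comp]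
  · change _ ∘ (Perm.sumCongr π ρ ∘ Sum.inl) = _
    rw [← Function.comp_assoc, mk_cycleSetoid_comp]
  · change _ ∘ (Perm.sumCongr π ρ ∘ Sum.inr) = _
    rw [← Function.comp_assoc, mk_cycleSetoid_comp]

theorem numCycles_mul_swap_add_one [Finite α] [DecidableEq α] {σ : Perm α} {a b : α}
    (hab : ¬σ.SameCycle a b) : numCycles (σ * swap a b) + 1 = numCycles σ := by
  set P := σ * swap a b
  let r (X Y : Quotient (cycleSetoid σ)) : Prop := X = Quotient.mk _ a ∧ Y = Quotient.mk _ b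
  have hP : (Quot.mk r ∘ Quotient.mk _) ∘ ⇑P = Quot.mk r ∘ Quotient.mk _ :=
    comp_mul_swap_eq (by rw [Function.comp_assoc, mk_cycleSetoid_comp]) (Quot.sound ⟨rfl, rfl⟩)
  have hσ : Quotient.mk (cycleSetoid P) ∘ ⇑σ = Quotient.mk _ := by
    rw [← mul_swap_mul_self a b σ]
    exact comp_mul_swap_eq (mk_cycleSetoid_comp P) (Quotient.sound (sameCycle_mul_swap hab))
  let e : Quotient (cycleSetoid P) ≃ Quot r :=
    { toFun := Quotient.lift (Quot.mk r ∘ Quotient.mk _) fun _ _ h => h.eq_of_comp_eq hP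
      invFun := Quot.lift (Quotient.lift (Quotient.mk _) fun _ _ h => h.eq_of_comp_eq hσ)
        (by rintro _ _ ⟨rfl, rfl⟩; exact Quotient.sound (sameCycle_mul_swap hab))
      left_inv := Quotient.ind fun _ => rfl
      right_inv := Quot.ind (Quotient.ind fun _ => rfl) }
  rw [numCycles, Nat.card_congr e]
  exact Nat.card_quot_pair_add_one fun h => hab (Quotient.exact h)

theorem numCycles_swap_mul_add_one [Finite α] [DecidableEq α] {σ : Perm α} {a b : α}
    (hab : ¬σ.SameCycle a b) : numCycles (swap a b * σ) + 1 = numCycles σ := by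
  rw [swap_mul_eq_mul_swap]
  exact numCycles_mul_swap_add_one
    (by rwa [Perm.inv_def, sameCycle_symm_apply_left, sameCycle_symm_apply_right])

end Cycles

section ConnSum

variable {D : ℕ} (R Q : CGraph D) (c : Fin D) (v : R.W) (v' : Q.W)

theorem biperm_connSum_of_ne {a b : Fin D} (ha : a ≠ c) (hb : b ≠ c) :
    (connSum R Q c v v').biperm a b = Perm.sumCongr (R.biperm a b) (Q.biperm a b) := by
  simp only [biperm, connSum, ha, hb, if_false, Equiv.sumCongr_symm, Equiv.sumCongr_trans]

open Classical in
theorem biperm_connSum_self_left {b : Fin D} (hb : b ≠ c) :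
    (connSum R Q c v v').biperm c b
      = Perm.sumCongr (R.biperm c b) (Q.biperm c b) * swap (.inl v) (.inr v') := by
  simp only [biperm, connSum, ↓reduceIte, if_neg hb]
  -- `connSum` builds its swap with this instance
  let : DecidableEq (R.B ⊕ Q.B) := Classical.decEq _
  rw [trans_swap_trans_symm_eq_mul_swap]
  simp [Equiv.sumCongr_symm, Equiv.sumCongr_trans]

open Classical in
theorem biperm_connSum_self_right {a : Fin D} (ha : a ≠ c) :
    (connSum R Q c v v').biperm a c
      = swap (.inl v) (.inr v') * Perm.sumCongr (R.biperm a c) (Q.biperm a c) := by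
  simp only [biperm, connSum, ↓reduceIte, if_neg ha]
  let : DecidableEq (R.B ⊕ Q.B) := Classical.decEq _
  rw [trans_symm_swap_eq_swap_mul]
  simp [Equiv.sumCongr_symm, Equiv.sumCongr_trans]

theorem numCycles_biperm_connSum_of_ne {a b : Fin D} (ha : a ≠ c) (hb : b ≠ c) :
    numCycles ((connSum R Q c v v').biperm a b)
      = numCycles (R.biperm a b) + numCycles (Q.biperm a b) := by
  have := R.finW
  have := Q.finW
  rw [biperm_connSum_of_ne R Q c v v' ha hb]
  exact numCycles_sumCongr _ _

theorem numCycles_biperm_connSum_add_one {a b : Fin D} (hab : a ≠ b) (hc : a = c ∨ b = c) :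
    numCycles ((connSum R Q c v v').biperm a b) + 1
      = numCycles (R.biperm a b) + numCycles (Q.biperm a b) := by
  classical
  have := R.finW
  have := Q.finW
  rw [← numCycles_sumCongr]
  rcases hc with rfl | rfl
  · rw [biperm_connSum_self_left R Q a v v' hab.symm]
    exact numCycles_mul_swap_add_one (α := R.W ⊕ Q.W) (not_sameCycle_sumCongr_inl_inr _ _ _ _)
  · rw [biperm_connSum_self_right R Q b v v' hab]
    exact numCycles_swap_mul_add_one (α := R.W ⊕ Q.W) (not_sameCycle_sumCongr_inl_inr _ _ _ _)

end ConnSum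

theorem faces_connSum_add_two (R Q : CGraph 3) (c : Fin 3) (v : R.W) (v' : Q.W) :
    (connSum R Q c v v').faces + 2 = R.faces + Q.faces := by
  have merged (a b : Fin 3) := numCycles_biperm_connSum_add_one R Q c v v' (a := a) (b := b)
  have kept (a b : Fin 3) := numCycles_biperm_connSum_of_ne R Q c v v' (a := a) (b := b)
  simp only [faces]
  fin_cases c
  · have := merged 0 1 (by decide) (by decide)
    have := merged 0 2 (by decide) (by decide)
    have := kept 1 2 (by decide) (by decide)
    omega
  · have := merged 0 1 (by decide) (by decide)
    have := kept 0 2 (by decide) (by decide)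
    have := merged 1 2 (by decide) (by decide)
    omega
  · have := kept 0 1 (by decide) (by decide)
    have := merged 0 2 (by decide) (by decide)
    have := merged 1 2 (by decide) (by decide)
    omega

end CGraph

theorem euler_connSum_general (R Q : CGraph 3) (c : Fin 3) (v : R.W) (v' : Q.W) :
    (CGraph.connSum R Q c v v').euler = R.euler + Q.euler - 2 := by
  have := R.finW
  have := Q.finW
  have hW : Nat.card (CGraph.connSum R Q c v v').W = Nat.card R.W + Nat.card Q.W :=
    Nat.card_sum
  have hF := CGraph.faces_connSum_add_two R Q c v v'
  simp only [CGraph.euler, hW]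
  push_cast
  omega

/-- For connected closed 3-colored graphs `R` and `Q`, any color `c`,
a color-`c` edge `e = (v, σ_c v)` of `R` and a color-`c` edge `f = (v', τ_c v')` of `Q`,
the Euler characteristic of the connected sum satisfies
`χ(R #_{e,f} Q) = χ(R) + χ(Q) − 2`. -/
theorem euler_connSum (R Q : CGraph 3) (hR : R.Connected) (hQ : Q.Connected)
    (c : Fin 3) (v : R.W) (v' : Q.W) :
    (CGraph.connSum R Q c v v').euler = R.euler + Q.euler - 2 :=
  euler_connSum_general R Q c v v'
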